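/- Let $b > 1/4$ and $k$ a positive integer with $k > b$, and $r \in \mathbb{R}$. Then $\int_{-\infty}^{\infty} \frac{e^{-\pi(|t-r| + |t+r|)/2} (1 + |t-r|)^{b - 3/4} (1 + |t+r|)^{b-3/4}}{(k + |t|)^{2b}}\, dt \ll e^{-\pi |r|} \frac{(1 + |r|)^{2b - 1/2}}{k^{2b}}$, with implied constant depending only on $b$. -/
import Mathlib

open Real MeasureTheory Set

private lemma abs_add_abs_eq' (t r : ℝ) : |t - r| + |t + r| = 2 * max |t| |r| := by
  rcases abs_cases t with ⟨ht, ht'⟩ | ⟨ht, ht'⟩ <;>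
  rcases abs_cases r with ⟨hr, hr'⟩ | ⟨hr, hr'⟩ <;>
  rcases abs_cases (t - r) with ⟨h1, h1'⟩ | ⟨h1, h1'⟩ <;>
  rcases abs_cases (t + r) with ⟨h2, h2'⟩ | ⟨h2, h2'⟩ <;>
  rcases max_cases |t| |r| with ⟨hm, hm'⟩ | ⟨hm, hm'⟩ <;> rw [hm] <;> linarith

private lemma prod_lower' (t r : ℝ) :
    (1 + |r|) * (1 + |(|t| - |r|)|) ≤ (1 + |t - r|) * (1 + |t + r|) := by
  have hx : (0:ℝ) ≤ |t| := abs_nonneg t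
  have hy : (0:ℝ) ≤ |r| := abs_nonneg r
  have hsum := abs_add_abs_eq' t r
  have hprod : |t - r| * |t + r| = |(|t| ^ 2 - |r| ^ 2)| := by
    rw [← abs_mul, sq_abs, sq_abs]
    congr 1; ring
  rcases le_total |t| |r| with h | h
  · rw [max_eq_right h] at hsum
    rw [abs_of_nonpos (by linarith : |t| - |r| ≤ 0)]
    rw [abs_of_nonpos (by nlinarith : |t| ^ 2 - |r| ^ 2 ≤ 0)] at hprod
    nlinarith
  · rw [max_eq_left h] at hsum
    rw [abs_of_nonneg (by linarith : (0:ℝ) ≤ |t| - |r|)]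
    rw [abs_of_nonneg (by nlinarith : (0:ℝ) ≤ |t| ^ 2 - |r| ^ 2)] at hprod
    nlinarith

private lemma poly_exp' {c s : ℝ} (hc : 0 ≤ c) (hs : 0 ≤ s) :
    (1 + s) ^ c * Real.exp (-Real.pi * s) ≤ Real.exp (c ^ 2 / 2) * Real.exp (-s) := by
  have h1s : (0:ℝ) < 1 + s := by linarith
  have hsq : Real.sqrt s ^ 2 = s := Real.sq_sqrt hs
  have hsq1 : Real.sqrt (1 + s) ^ 2 = 1 + s := Real.sq_sqrt h1s.le
  have hs1 : Real.sqrt (1 + s) ≤ 1 + Real.sqrt s := by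
    nlinarith [Real.sqrt_nonneg s, Real.sqrt_nonneg (1 + s)]
  have hlog : Real.log (1 + s) ≤ 2 * Real.sqrt s := by
    have h2 : Real.log (Real.sqrt (1 + s)) ≤ Real.sqrt (1 + s) - 1 :=
      Real.log_le_sub_one_of_pos (Real.sqrt_pos.mpr h1s)
    have h3 : Real.log (Real.sqrt (1 + s)) = Real.log (1 + s) / 2 :=
      Real.log_sqrt h1s.le
    linarith
  have hamgm : c * Real.log (1 + s) ≤ c ^ 2 / 2 + 2 * s := by
    have h4 : c * (2 * Real.sqrt s) ≤ c ^ 2 / 2 + 2 * s := by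
      nlinarith [sq_nonneg (c - 2 * Real.sqrt s)]
    have h5 : c * Real.log (1 + s) ≤ c * (2 * Real.sqrt s) :=
      mul_le_mul_of_nonneg_left hlog hc
    linarith
  have hpi : (3:ℝ) ≤ Real.pi := Real.pi_gt_three.le
  rw [Real.rpow_def_of_pos h1s, ← Real.exp_add, ← Real.exp_add]
  apply Real.exp_le_exp.mpr
  nlinarith

private lemma tail_int' (a : ℝ) : ∫ x in Ioi a, Real.exp (a - x) = 1 := by
  have h : ∀ x : ℝ, Real.exp (a - x) = Real.exp a * Real.exp (-x) := fun x => by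
    rw [← Real.exp_add]; ring_nf
  simp_rw [h, integral_const_mul, integral_exp_neg_Ioi, ← Real.exp_add]
  simp

private lemma integrable_exp_neg_abs' : Integrable (fun t : ℝ => Real.exp (-|t|)) := by
  have h1 : IntegrableOn (fun t : ℝ => Real.exp (-|t|)) (Iic 0) := by
    apply (integrableOn_exp_Iic 0).congr_fun ?_ measurableSet_Iic
    intro x hx
    simp [abs_of_nonpos (mem_Iic.mp hx)]
  have h2 : IntegrableOn (fun t : ℝ => Real.exp (-|t|)) (Ioi 0) := by
    apply (exp_neg_integrableOn_Ioi 0 one_pos).congr_fun ?_ measurableSet_Ioi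
    intro x hx
    simp [abs_of_pos (mem_Ioi.mp hx)]
  have h3 := h1.union h2
  rwa [Iic_union_Ioi, integrableOn_univ] at h3

set_option maxHeartbeats 1000000 in
/-- For `b > 1/4`, integers `k > b` and real `r`:
`∫ℝ e^{-π(|t-r|+|t+r|)/2}(1+|t-r|)^{b-3/4}(1+|t+r|)^{b-3/4}/(k+|t|)^{2b} dt
  ≪ e^{-π|r|}(1+|r|)^{2b-1/2}/k^{2b}`, constant depending only on `b`. -/
theorem stmt17 (b : ℝ) (hb : 1 / 4 < b) :
    ∃ C > 0, ∀ k : ℕ, b < (k : ℝ) → ∀ r : ℝ,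
      (∫ t : ℝ,
          Real.exp (-(Real.pi * (|t - r| + |t + r|)) / 2) *
            (1 + |t - r|) ^ (b - 3 / 4) * (1 + |t + r|) ^ (b - 3 / 4) /
              ((k : ℝ) + |t|) ^ (2 * b)) ≤
        C * Real.exp (-(Real.pi * |r|)) * (1 + |r|) ^ (2 * b - 1 / 2) /
          (k : ℝ) ^ (2 * b) := by
  set E := b - 3 / 4 with hE
  set β := min E 0 with hβdef
  set c := 2 * |E| with hcdef
  have hc0 : 0 ≤ c := by rw [hcdef]; positivity
  have hβ0 : β ≤ 0 := min_le_right _ _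
  have hβ1 : (-1:ℝ) < β := lt_min (by rw [hE]; linarith) (by norm_num)
  have hβp : (0:ℝ) < β + 1 := by linarith
  have h4E : (1:ℝ) ≤ 4 ^ |E| := Real.one_le_rpow (by norm_num) (abs_nonneg E)
  refine ⟨2 * 4 ^ |E| * (1 / (β + 1) + Real.exp (c ^ 2 / 2)), ?_, ?_⟩
  · have : (0:ℝ) < 1 / (β + 1) + Real.exp (c ^ 2 / 2) :=
      add_pos (div_pos one_pos hβp) (Real.exp_pos _)
    positivity
  intro k hk r
  have hkR : (0:ℝ) < (k:ℝ) := by linarith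
  have hR : (0:ℝ) ≤ |r| := abs_nonneg r
  have h1r : (0:ℝ) < 1 + |r| := by linarith
  set g : ℝ → ℝ := fun x =>
    (1 + |(x - |r|)|) ^ β * (1 + max (x - |r|) 0) ^ c *
      Real.exp (-Real.pi * max (x - |r|) 0) with hgdef
  set K : ℝ := 4 ^ |E| * Real.exp (-(Real.pi * |r|)) * (1 + |r|) ^ (2 * b - 3 / 2 - β) /
      (k:ℝ) ^ (2 * b) with hKdef
  have hKnn : 0 ≤ K := by
    rw [hKdef]
    have h1 : (0:ℝ) ≤ (1 + |r|) ^ (2 * b - 3 / 2 - β) := Real.rpow_nonneg h1r.le _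
    positivity
  have hgnn : ∀ x : ℝ, 0 ≤ g x := by
    intro x
    rw [hgdef]
    have h1 : (0:ℝ) < 1 + |(x - |r|)| := by positivity
    have h2 : (0:ℝ) < 1 + max (x - |r|) 0 := by
      have := le_max_right (x - |r|) 0; linarith
    have := Real.rpow_nonneg h1.le β
    have := Real.rpow_nonneg h2.le c
    have := (Real.exp_pos (-Real.pi * max (x - |r|) 0)).le
    dsimp only
    positivity
  have gbound : ∀ x : ℝ, g x ≤ Real.exp (c ^ 2 / 2) * Real.exp (|r| - x) := by
    intro x
    have hu0 : (0:ℝ) ≤ max (x - |r|) 0 := le_max_right _ _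
    have h1 : (1 + |(x - |r|)|) ^ β ≤ 1 :=
      Real.rpow_le_one_of_one_le_of_nonpos (by linarith [abs_nonneg (x - |r|)]) hβ0
    have h2 : (1 + max (x - |r|) 0) ^ c * Real.exp (-Real.pi * max (x - |r|) 0) ≤
        Real.exp (c ^ 2 / 2) * Real.exp (-(max (x - |r|) 0)) := poly_exp' hc0 hu0
    have h3 : Real.exp (-(max (x - |r|) 0)) ≤ Real.exp (|r| - x) := by
      apply Real.exp_le_exp.mpr
      have := le_max_left (x - |r|) 0
      linarith
    have h2' : (0:ℝ) ≤ (1 + max (x - |r|) 0) ^ c * Real.exp (-Real.pi * max (x - |r|) 0) := by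
      have hb2 : (0:ℝ) < 1 + max (x - |r|) 0 := by linarith
      have := Real.rpow_nonneg hb2.le c
      have := (Real.exp_pos (-Real.pi * max (x - |r|) 0)).le
      positivity
    calc g x = (1 + |(x - |r|)|) ^ β *
          ((1 + max (x - |r|) 0) ^ c * Real.exp (-Real.pi * max (x - |r|) 0)) := by
            rw [hgdef]; ring
      _ ≤ 1 * (Real.exp (c ^ 2 / 2) * Real.exp (-(max (x - |r|) 0))) := by
            apply mul_le_mul h1 h2 h2' (by norm_num)
      _ = Real.exp (c ^ 2 / 2) * Real.exp (-(max (x - |r|) 0)) := by rw [one_mul]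
      _ ≤ Real.exp (c ^ 2 / 2) * Real.exp (|r| - x) :=
            mul_le_mul_of_nonneg_left h3 (Real.exp_pos _).le
  -- pointwise bound
  have hpt : ∀ t : ℝ,
      Real.exp (-(Real.pi * (|t - r| + |t + r|)) / 2) * (1 + |t - r|) ^ E *
          (1 + |t + r|) ^ E / ((k : ℝ) + |t|) ^ (2 * b) ≤ K * g |t| := by
    intro t
    have hu0 : (0:ℝ) ≤ max (|t| - |r|) 0 := le_max_right _ _
    have h1u : (0:ℝ) < 1 + max (|t| - |r|) 0 := by linarith
    have h1d : (0:ℝ) < 1 + |(|t| - |r|)| := by positivity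
    have hmax : max |t| |r| = |r| + max (|t| - |r|) 0 := by
      rcases le_total |t| |r| with h | h
      · rw [max_eq_right h, max_eq_right (by linarith : |t| - |r| ≤ 0)]; ring
      · rw [max_eq_left h, max_eq_left (by linarith : (0:ℝ) ≤ |t| - |r|)]; ring
    have hexp : Real.exp (-(Real.pi * (|t - r| + |t + r|)) / 2)
        = Real.exp (-(Real.pi * |r|)) * Real.exp (-Real.pi * max (|t| - |r|) 0) := by
      rw [← Real.exp_add]
      congr 1
      rw [abs_add_abs_eq' t r, hmax]
      ring
    have hnum : (1 + |t - r|) ^ E * (1 + |t + r|) ^ E ≤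
        4 ^ |E| * (1 + |r|) ^ (2 * b - 3 / 2 - β) *
          ((1 + |(|t| - |r|)|) ^ β * (1 + max (|t| - |r|) 0) ^ c) := by
      rcases le_or_gt 0 E with hE0 | hE0
      · -- E ≥ 0
        have hβE : β = 0 := by rw [hβdef]; exact min_eq_right hE0
        have habsE : |E| = E := abs_of_nonneg hE0
        set A := 2 * ((1 + |r|) * (1 + max (|t| - |r|) 0)) with hA
        have hApos : (0:ℝ) < A := by
          rw [hA]; exact mul_pos two_pos (mul_pos h1r h1u)
        have htr : |t - r| ≤ |t| + |r| := by
          calc |t - r| = |t + -r| := by ring_nf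
            _ ≤ |t| + |-r| := abs_add_le t (-r)
            _ = |t| + |r| := by rw [abs_neg]
        have htr' : |t + r| ≤ |t| + |r| := abs_add_le t r
        have ht' : |t| ≤ |r| + max (|t| - |r|) 0 := by
          have := le_max_left (|t| - |r|) 0; linarith
        have hb1 : 1 + |t - r| ≤ A := by rw [hA]; nlinarith
        have hb2 : 1 + |t + r| ≤ A := by rw [hA]; nlinarith
        have hP1 : (1 + |t - r|) ^ E ≤ A ^ E :=
          Real.rpow_le_rpow (by positivity) hb1 hE0
        have hP2 : (1 + |t + r|) ^ E ≤ A ^ E :=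
          Real.rpow_le_rpow (by positivity) hb2 hE0
        have hPP : (1 + |t - r|) ^ E * (1 + |t + r|) ^ E ≤ A ^ E * A ^ E :=
          mul_le_mul hP1 hP2 (Real.rpow_nonneg (by positivity) E)
            (Real.rpow_nonneg hApos.le E)
        have hAE : A ^ E = 2 ^ E * ((1 + |r|) ^ E * (1 + max (|t| - |r|) 0) ^ E) := by
          rw [hA, Real.mul_rpow (by norm_num) (mul_nonneg h1r.le h1u.le),
            Real.mul_rpow h1r.le h1u.le]
        have h24 : (2:ℝ) ^ E * 2 ^ E = 4 ^ E := by
          rw [← Real.mul_rpow (by norm_num) (by norm_num)]; norm_num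
        have hRR : (1 + |r|) ^ E * (1 + |r|) ^ E = (1 + |r|) ^ (2 * b - 3 / 2 - β) := by
          rw [← Real.rpow_add h1r, hβE, hE]; congr 1; ring
        have hUU : (1 + max (|t| - |r|) 0) ^ E * (1 + max (|t| - |r|) 0) ^ E
            = (1 + max (|t| - |r|) 0) ^ c := by
          rw [← Real.rpow_add h1u, hcdef, habsE]; congr 1; ring
        have hd0 : (1 + |(|t| - |r|)|) ^ β = 1 := by rw [hβE, Real.rpow_zero]
        calc (1 + |t - r|) ^ E * (1 + |t + r|) ^ E ≤ A ^ E * A ^ E := hPP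
          _ = 4 ^ E * ((1 + |r|) ^ E * (1 + |r|) ^ E) *
              ((1 + max (|t| - |r|) 0) ^ E * (1 + max (|t| - |r|) 0) ^ E) := by
                rw [hAE, ← h24]; ring
          _ = 4 ^ |E| * (1 + |r|) ^ (2 * b - 3 / 2 - β) *
              ((1 + |(|t| - |r|)|) ^ β * (1 + max (|t| - |r|) 0) ^ c) := by
                rw [hRR, hUU, hd0, habsE]; ring
      · -- E < 0
        have hβE : β = E := by rw [hβdef]; exact min_eq_left hE0.le
        have hexp_eq : 2 * b - 3 / 2 - β = E := by rw [hβE, hE]; ring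
        rw [hexp_eq]
        have hQ : (1:ℝ) ≤ (1 + max (|t| - |r|) 0) ^ c :=
          Real.one_le_rpow (by linarith) hc0
        have hP1nn : (0:ℝ) ≤ (1 + |r|) ^ E := Real.rpow_nonneg h1r.le E
        have hP2nn : (0:ℝ) ≤ (1 + |(|t| - |r|)|) ^ E := Real.rpow_nonneg h1d.le E
        have step0 : (1 + |t - r|) ^ E * (1 + |t + r|) ^ E
            = ((1 + |t - r|) * (1 + |t + r|)) ^ E :=
          (Real.mul_rpow (by positivity) (by positivity)).symm
        have step1 : ((1 + |t - r|) * (1 + |t + r|)) ^ E ≤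
            ((1 + |r|) * (1 + |(|t| - |r|)|)) ^ E :=
          Real.rpow_le_rpow_of_nonpos (by positivity) (prod_lower' t r) hE0.le
        have step2 : ((1 + |r|) * (1 + |(|t| - |r|)|)) ^ E
            = (1 + |r|) ^ E * (1 + |(|t| - |r|)|) ^ E :=
          Real.mul_rpow h1r.le h1d.le
        have step3 : (1 + |r|) ^ E * (1 + |(|t| - |r|)|) ^ E ≤
            4 ^ |E| * (1 + |r|) ^ E *
              ((1 + |(|t| - |r|)|) ^ E * (1 + max (|t| - |r|) 0) ^ c) := by
          have s1 : (1 + |r|) ^ E * (1 + |(|t| - |r|)|) ^ E * 1 ≤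
              (1 + |r|) ^ E * (1 + |(|t| - |r|)|) ^ E *
                (1 + max (|t| - |r|) 0) ^ c :=
            mul_le_mul_of_nonneg_left hQ (mul_nonneg hP1nn hP2nn)
          have s2 : (1 + |r|) ^ E * (1 + |(|t| - |r|)|) ^ E *
              (1 + max (|t| - |r|) 0) ^ c ≤
              4 ^ |E| * ((1 + |r|) ^ E * (1 + |(|t| - |r|)|) ^ E *
                (1 + max (|t| - |r|) 0) ^ c) := by
            apply le_mul_of_one_le_left ?_ h4E
            have := Real.rpow_nonneg h1u.le c
            positivity
          calc (1 + |r|) ^ E * (1 + |(|t| - |r|)|) ^ E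
              = (1 + |r|) ^ E * (1 + |(|t| - |r|)|) ^ E * 1 := by ring
            _ ≤ (1 + |r|) ^ E * (1 + |(|t| - |r|)|) ^ E *
                (1 + max (|t| - |r|) 0) ^ c := s1
            _ ≤ 4 ^ |E| * ((1 + |r|) ^ E * (1 + |(|t| - |r|)|) ^ E *
                (1 + max (|t| - |r|) 0) ^ c) := s2
            _ = 4 ^ |E| * (1 + |r|) ^ E *
                ((1 + |(|t| - |r|)|) ^ E * (1 + max (|t| - |r|) 0) ^ c) := by ring
        rw [hβE]
        calc (1 + |t - r|) ^ E * (1 + |t + r|) ^ E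
            = ((1 + |t - r|) * (1 + |t + r|)) ^ E := step0
          _ ≤ ((1 + |r|) * (1 + |(|t| - |r|)|)) ^ E := step1
          _ = (1 + |r|) ^ E * (1 + |(|t| - |r|)|) ^ E := step2
          _ ≤ 4 ^ |E| * (1 + |r|) ^ E *
              ((1 + |(|t| - |r|)|) ^ E * (1 + max (|t| - |r|) 0) ^ c) := step3
    -- denominator and combination
    have hden : ((k:ℝ)) ^ (2 * b) ≤ ((k:ℝ) + |t|) ^ (2 * b) :=
      Real.rpow_le_rpow hkR.le (by linarith [abs_nonneg t]) (by linarith)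
    have hkpow : (0:ℝ) < (k:ℝ) ^ (2 * b) := Real.rpow_pos_of_pos hkR _
    have hN'nn : (0:ℝ) ≤ 4 ^ |E| * (1 + |r|) ^ (2 * b - 3 / 2 - β) *
        ((1 + |(|t| - |r|)|) ^ β * (1 + max (|t| - |r|) 0) ^ c) := by
      have := Real.rpow_nonneg h1r.le (2 * b - 3 / 2 - β)
      have := Real.rpow_nonneg h1d.le β
      have := Real.rpow_nonneg h1u.le c
      positivity
    have hfullnum : Real.exp (-(Real.pi * (|t - r| + |t + r|)) / 2) * (1 + |t - r|) ^ E *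
        (1 + |t + r|) ^ E ≤
        (Real.exp (-(Real.pi * |r|)) * Real.exp (-Real.pi * max (|t| - |r|) 0)) *
          (4 ^ |E| * (1 + |r|) ^ (2 * b - 3 / 2 - β) *
            ((1 + |(|t| - |r|)|) ^ β * (1 + max (|t| - |r|) 0) ^ c)) := by
      have h0 : Real.exp (-(Real.pi * (|t - r| + |t + r|)) / 2) * (1 + |t - r|) ^ E *
          (1 + |t + r|) ^ E =
          (Real.exp (-(Real.pi * |r|)) * Real.exp (-Real.pi * max (|t| - |r|) 0)) *
            ((1 + |t - r|) ^ E * (1 + |t + r|) ^ E) := by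
        rw [hexp]; ring
      rw [h0]
      exact mul_le_mul_of_nonneg_left hnum (by positivity)
    have hdiv : Real.exp (-(Real.pi * (|t - r| + |t + r|)) / 2) * (1 + |t - r|) ^ E *
        (1 + |t + r|) ^ E / ((k : ℝ) + |t|) ^ (2 * b) ≤
        (Real.exp (-(Real.pi * |r|)) * Real.exp (-Real.pi * max (|t| - |r|) 0)) *
          (4 ^ |E| * (1 + |r|) ^ (2 * b - 3 / 2 - β) *
            ((1 + |(|t| - |r|)|) ^ β * (1 + max (|t| - |r|) 0) ^ c)) /
          (k:ℝ) ^ (2 * b) :=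
      div_le_div₀ (by positivity) hfullnum hkpow hden
    refine hdiv.trans_eq ?_
    rw [hKdef, hgdef]
    dsimp only
    ring
  -- continuity of g
  have hgc : Continuous g := by
    rw [hgdef]
    have c1 : Continuous fun x : ℝ => 1 + |(x - |r|)| :=
      continuous_const.add ((continuous_id.sub continuous_const).abs)
    have c2 : Continuous fun x : ℝ => 1 + max (x - |r|) 0 :=
      continuous_const.add ((continuous_id.sub continuous_const).max continuous_const)
    have c3 : Continuous fun x : ℝ => max (x - |r|) 0 :=
      (continuous_id.sub continuous_const).max continuous_const
    refine ((c1.rpow_const ?_).mul (c2.rpow_const ?_)).mul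
      (Real.continuous_exp.comp (continuous_const.mul c3))
    · intro x; left; positivity
    · intro x
      left
      have := le_max_right (x - |r|) 0
      intro hcon
      nlinarith
  -- integrability of majorant
  have hGi : Integrable (fun t : ℝ => K * g |t|) := by
    apply Integrable.const_mul
    apply Integrable.mono'
      (g := fun t : ℝ => Real.exp (c ^ 2 / 2) * Real.exp |r| * Real.exp (-|t|))
    · exact integrable_exp_neg_abs'.const_mul _
    · exact (hgc.comp continuous_abs).aestronglyMeasurable
    · refine ae_of_all _ fun t => ?_
      rw [norm_of_nonneg (hgnn |t|)]
      refine (gbound |t|).trans_eq ?_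
      rw [show |r| - |t| = |r| + -|t| by ring, Real.exp_add]
      ring
  -- integrability on pieces
  have hgiIoc : IntegrableOn g (Ioc 0 |r|) := hgc.integrableOn_Ioc
  have hdom_int : IntegrableOn (fun x : ℝ => Real.exp (c ^ 2 / 2) * Real.exp (|r| - x))
      (Ioi |r|) := by
    have h := (exp_neg_integrableOn_Ioi (|r|) one_pos).const_mul
      (Real.exp (c ^ 2 / 2) * Real.exp |r|)
    apply IntegrableOn.congr_fun h ?_ measurableSet_Ioi
    intro x _
    dsimp only
    rw [show |r| - x = |r| + -(1 * x) by ring, Real.exp_add]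
    ring
  have hgiIoi : IntegrableOn g (Ioi |r|) := by
    apply hdom_int.mono' hgc.aestronglyMeasurable.restrict
    refine ae_of_all _ fun x => ?_
    rw [norm_of_nonneg (hgnn x)]
    exact gbound x
  have hsplit : ∫ x in Ioi (0:ℝ), g x = (∫ x in Ioc 0 |r|, g x) + ∫ x in Ioi |r|, g x := by
    rw [← setIntegral_union (Ioc_disjoint_Ioi le_rfl) measurableSet_Ioi hgiIoc hgiIoi,
      Ioc_union_Ioi_eq_Ioi hR]
  have hIoc : ∫ x in Ioc (0:ℝ) |r|, g x ≤ (1 + |r|) ^ (β + 1) / (β + 1) := by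
    have heq : ∫ x in Ioc (0:ℝ) |r|, g x = ∫ x in Ioc (0:ℝ) |r|, (1 + |r| - x) ^ β := by
      apply setIntegral_congr_fun measurableSet_Ioc
      intro x hx
      obtain ⟨hx1, hx2⟩ := hx
      rw [hgdef]
      dsimp only
      rw [abs_of_nonpos (by linarith : x - |r| ≤ 0),
        max_eq_right (by linarith : x - |r| ≤ 0), add_zero, Real.one_rpow, mul_one,
        mul_zero, Real.exp_zero, mul_one]
      congr 1
      ring
    rw [heq, ← intervalIntegral.integral_of_le hR]
    have hcomp : (∫ x in (0:ℝ)..|r|, (1 + |r| - x) ^ β)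
        = ∫ y in (1 + |r| - |r|)..(1 + |r| - 0), y ^ β :=
      intervalIntegral.integral_comp_sub_left (fun y => y ^ β) (1 + |r|)
    rw [hcomp, show (1:ℝ) + |r| - |r| = 1 by ring, sub_zero,
      integral_rpow (Or.inl hβ1), Real.one_rpow]
    exact (div_le_div_iff_of_pos_right hβp).mpr (by linarith)
  have hIoiR : ∫ x in Ioi |r|, g x ≤ Real.exp (c ^ 2 / 2) := by
    have h1 : ∫ x in Ioi |r|, g x ≤
        ∫ x in Ioi |r|, Real.exp (c ^ 2 / 2) * Real.exp (|r| - x) :=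
      setIntegral_mono_on hgiIoi hdom_int measurableSet_Ioi fun x _ => gbound x
    have h2 : ∫ x in Ioi |r|, Real.exp (c ^ 2 / 2) * Real.exp (|r| - x)
        = Real.exp (c ^ 2 / 2) := by
      rw [integral_const_mul, tail_int' |r|, mul_one]
    linarith
  have hone : (1:ℝ) ≤ (1 + |r|) ^ (β + 1) := Real.one_le_rpow (by linarith) hβp.le
  have hIoi : ∫ x in Ioi (0:ℝ), g x ≤
      (1 / (β + 1) + Real.exp (c ^ 2 / 2)) * (1 + |r|) ^ (β + 1) := by
    rw [hsplit]
    have hfin : (1 + |r|) ^ (β + 1) / (β + 1) + Real.exp (c ^ 2 / 2) ≤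
        (1 / (β + 1) + Real.exp (c ^ 2 / 2)) * (1 + |r|) ^ (β + 1) := by
      have he : (0:ℝ) < Real.exp (c ^ 2 / 2) := Real.exp_pos _
      have h5 : Real.exp (c ^ 2 / 2) * 1 ≤ Real.exp (c ^ 2 / 2) * (1 + |r|) ^ (β + 1) :=
        mul_le_mul_of_nonneg_left hone he.le
      have h6 : (1 + |r|) ^ (β + 1) / (β + 1) = 1 / (β + 1) * (1 + |r|) ^ (β + 1) := by
        ring
      rw [add_mul, ← h6]
      linarith
    linarith [add_le_add hIoc hIoiR]
  have hcomb : (1 + |r|) ^ (2 * b - 3 / 2 - β) * (1 + |r|) ^ (β + 1)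
      = (1 + |r|) ^ (2 * b - 1 / 2) := by
    rw [← Real.rpow_add h1r]
    congr 1
    ring
  calc (∫ t : ℝ, Real.exp (-(Real.pi * (|t - r| + |t + r|)) / 2) *
        (1 + |t - r|) ^ E * (1 + |t + r|) ^ E / ((k : ℝ) + |t|) ^ (2 * b))
      ≤ ∫ t : ℝ, K * g |t| :=
        integral_mono_of_nonneg (ae_of_all _ fun t => by positivity) hGi (ae_of_all _ hpt)
    _ = K * ∫ t : ℝ, g |t| := integral_const_mul _ _
    _ = K * (2 * ∫ x in Ioi (0:ℝ), g x) := by rw [integral_comp_abs (f := g)]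
    _ ≤ K * (2 * ((1 / (β + 1) + Real.exp (c ^ 2 / 2)) * (1 + |r|) ^ (β + 1))) := by
        apply mul_le_mul_of_nonneg_left ?_ hKnn
        exact mul_le_mul_of_nonneg_left hIoi (by norm_num)
    _ = 2 * 4 ^ |E| * (1 / (β + 1) + Real.exp (c ^ 2 / 2)) * Real.exp (-(Real.pi * |r|)) *
        (1 + |r|) ^ (2 * b - 1 / 2) / (k:ℝ) ^ (2 * b) := by
        rw [hKdef, ← hcomb]
        ring
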